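/- Uniform elimination of imaginaries for Presburger arithmetic: let G be a Z-group. For every ∅-definable equivalence relation E on G^k there exist an integer r and a ∅-definable function F : G^k → G^r such that for all x, y ∈ G^k, E(x,y) holds if and only if F(x) = F(y). -/

import Mathlib

open FirstOrder FirstOrder.Language

universe u v w

namespace Presburger

/-- Function symbols of the Presburger language: `+`, `0`, `1`. -/
inductive Func : ℕ → Type
  | add : Func 2
  | zero : Func 0
  | one : Func 0

/-- Relation symbols of the Presburger language: `≤` and congruence mod `n` for each `n > 0`. -/
inductive Rel : ℕ → Type
  | le : Rel 2
  | mod (n : ℕ) (hn : 0 < n) : Rel 2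

/-- The Presburger language `⟨+, ≤, {≡ mod n}_{n>0}, 0, 1⟩`. -/
def Lang : FirstOrder.Language := ⟨Func, Rel⟩

/-- The natural interpretation of the Presburger language on a linearly ordered abelian
group with a distinguished element `1`; congruence mod `n` means the difference is an
`n`-th multiple. -/
instance instStructure (G : Type*) [AddCommGroup G] [LinearOrder G] [One G] :
    Lang.Structure G where
  funMap {_} f v :=
    match f with
    | Func.add => v 0 + v 1
    | Func.zero => 0
    | Func.one => 1
  RelMap {_} r v :=
    match r with
    | Rel.le => v 0 ≤ v 1
    | Rel.mod k _ => ∃ z, v 0 - v 1 = (k : ℤ) • z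

/-- A `Z`-group: a structure elementarily equivalent to `ℤ` in the Presburger language. -/
def IsZGroup (G : Type*) [AddCommGroup G] [LinearOrder G] [One G] : Prop :=
  ℤ ≅[Lang] G

variable {G : Type u} [AddCommGroup G] [LinearOrder G] [One G]

section Semantics
variable {M : Type*} [AddCommGroup M] [LinearOrder M] [One M]

def AbsLt (a b : M) : Prop := (a < b ∨ a + b < 0) ∧ (0 < a + b ∨ b < a)
def Sle (a b : M) : Prop := AbsLt a b ∨ (¬ AbsLt b a ∧ a ≤ b)
def Slt (a b : M) : Prop := Sle a b ∧ a ≠ b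
def LexLe {k : ℕ} (x y : Fin k → M) : Prop :=
  x = y ∨ ∃ i, (∀ j, j < i → x j = y j) ∧ Slt (x i) (y i)
end Semantics

section Formulas

variable {M : Type*} [AddCommGroup M] [LinearOrder M] [One M] {α : Type*}

def addT (s t : Lang.Term α) : Lang.Term α := Functions.apply₂ (Func.add : Lang.Functions 2) s t

def zeroT : Lang.Term α := Constants.term (Func.zero : Lang.Constants)

@[simp] lemma realize_addT (s t : Lang.Term α) (v : α → M) :
    (addT s t).realize v = s.realize v + t.realize v := by
  simp only [addT, Term.realize_functions_apply₂]
  rfl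

@[simp] lemma realize_zeroT (v : α → M) : (zeroT : Lang.Term α).realize v = (0 : M) := rfl

def leF (s t : Lang.Term α) : Lang.Formula α := Relations.formula₂ (Rel.le : Lang.Relations 2) s t

@[simp] lemma realize_leF {s t : Lang.Term α} {v : α → M} :
    (leF s t).Realize v ↔ s.realize v ≤ t.realize v := by
  refine (Formula.realize_rel₂ (L := Lang) (R := (Rel.le : Lang.Relations 2))).trans ?_
  exact Iff.rfl

def ltF (s t : Lang.Term α) : Lang.Formula α := leF s t ⊓ ∼(Term.equal s t)

@[simp] lemma realize_ltF {s t : Lang.Term α} {v : α → M} :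
    (ltF s t).Realize v ↔ s.realize v < t.realize v := by
  simp [ltF, lt_iff_le_and_ne]

def absLtF (s t : Lang.Term α) : Lang.Formula α :=
  (ltF s t ⊔ ltF (addT s t) zeroT) ⊓ (ltF zeroT (addT s t) ⊔ ltF t s)

@[simp] lemma realize_absLtF {s t : Lang.Term α} {v : α → M} :
    (absLtF s t).Realize v ↔ AbsLt (s.realize v) (t.realize v) := by
  simp [absLtF, AbsLt]

def sleF (s t : Lang.Term α) : Lang.Formula α := absLtF s t ⊔ (∼(absLtF t s) ⊓ leF s t)

@[simp] lemma realize_sleF {s t : Lang.Term α} {v : α → M} :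
    (sleF s t).Realize v ↔ Sle (s.realize v) (t.realize v) := by
  simp [sleF, Sle]

def sltF (s t : Lang.Term α) : Lang.Formula α := sleF s t ⊓ ∼(Term.equal s t)

@[simp] lemma realize_sltF {s t : Lang.Term α} {v : α → M} :
    (sltF s t).Realize v ↔ Slt (s.realize v) (t.realize v) := by
  simp [sltF, Slt]

noncomputable def lexLeF (k : ℕ) : Lang.Formula (Fin k ⊕ Fin k) :=
  (BoundedFormula.iInf fun i : Fin k =>
      Term.equal (Term.var (Sum.inl i)) (Term.var (Sum.inr i))) ⊔
  (BoundedFormula.iSup fun i : Fin k =>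
      (BoundedFormula.iInf fun j : {j : Fin k // j < i} =>
        Term.equal (Term.var (Sum.inl j.1)) (Term.var (Sum.inr j.1))) ⊓
      sltF (Term.var (Sum.inl i)) (Term.var (Sum.inr i)))

@[simp] lemma realize_lexLeF {k : ℕ} {v : Fin k ⊕ Fin k → M} :
    (lexLeF k).Realize v ↔ LexLe (v ∘ Sum.inl) (v ∘ Sum.inr) := by
  have h0 : ∀ (θ ψ : Lang.Formula (Fin k ⊕ Fin k)), (θ ⊔ ψ).Realize v ↔ θ.Realize v ∨ ψ.Realize v :=
    fun _ _ => Formula.realize_sup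
  have hbd : ∀ (θ : Lang.Formula (Fin k ⊕ Fin k)) (w : Fin k ⊕ Fin k → M),
      BoundedFormula.Realize θ w default ↔ θ.Realize w := fun _ _ => Iff.rfl
  rw [lexLeF, h0, LexLe]
  apply or_congr
  · rw [Formula.Realize, BoundedFormula.realize_iInf]
    simp [hbd, funext_iff, Function.comp]
  · rw [Formula.Realize, BoundedFormula.realize_iSup]
    refine exists_congr fun i => ?_
    rw [BoundedFormula.realize_inf, BoundedFormula.realize_iInf]
    simp [hbd, Function.comp]

end Formulas

section Psi

variable {M : Type*} [AddCommGroup M] [LinearOrder M] [One M] {k : ℕ}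

/-- `ψ(x,y)`: `φ(x,y)` and `y` is `LexLe`-minimal with `φ(x,y)`. -/
noncomputable def psiF (φ : Lang.Formula (Fin k ⊕ Fin k)) : Lang.Formula (Fin k ⊕ Fin k) :=
  φ ⊓ Formula.iAlls (Fin k)
    ((φ.relabel (Sum.elim (fun i => Sum.inl (Sum.inl i)) Sum.inr)) ⟹
      ((lexLeF k).relabel (Sum.elim (fun i => Sum.inl (Sum.inr i)) Sum.inr)))

lemma realize_psiF {φ : Lang.Formula (Fin k ⊕ Fin k)} {x y : Fin k → M} :
    (psiF φ).Realize (Sum.elim x y) ↔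
      φ.Realize (Sum.elim x y) ∧ ∀ w : Fin k → M, φ.Realize (Sum.elim x w) → LexLe y w := by
  rw [psiF, Formula.realize_inf, Formula.realize_iAlls]
  refine and_congr_right fun _ => ?_
  refine forall_congr' fun w => ?_
  rw [Formula.realize_imp, Formula.realize_relabel, Formula.realize_relabel]
  have h1 : (fun a => Sum.elim (Sum.elim x y) w a) ∘
      (Sum.elim (fun i => Sum.inl (Sum.inl i)) Sum.inr : Fin k ⊕ Fin k → (Fin k ⊕ Fin k) ⊕ Fin k)
      = Sum.elim x w := by
    funext a; rcases a with a | a <;> rfl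
  have h2 : (fun a => Sum.elim (Sum.elim x y) w a) ∘
      (Sum.elim (fun i => Sum.inl (Sum.inr i)) Sum.inr : Fin k ⊕ Fin k → (Fin k ⊕ Fin k) ⊕ Fin k)
      = Sum.elim y w := by
    funext a; rcases a with a | a <;> rfl
  rw [h1, h2, realize_lexLeF]
  simp

end Psi

section Sentences

variable {M : Type*} [AddCommGroup M] [LinearOrder M] [One M] {k : ℕ}

/-- Universal closure of a formula with finitely many free variables. -/
noncomputable def sAll {β : Type} [Finite β] (θ : Lang.Formula β) : Lang.Sentence :=
  Formula.iAlls β (θ.relabel (Sum.inr : β → Empty ⊕ β))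

lemma realize_sAll {β : Type} [Finite β] {θ : Lang.Formula β} :
    (M ⊨ sAll θ) ↔ ∀ v : β → M, θ.Realize v := by
  rw [Sentence.Realize, sAll, Formula.realize_iAlls]
  exact forall_congr' fun v => Formula.realize_relabel.trans Iff.rfl

lemma realize_sAll2 {θ : Lang.Formula (Fin k ⊕ Fin k)} :
    (M ⊨ sAll θ) ↔ ∀ x y : Fin k → M, θ.Realize (Sum.elim x y) := by
  rw [realize_sAll]
  constructor
  · intro h x y; exact h _
  · intro h v
    have : v = Sum.elim (fun i => v (Sum.inl i)) (fun i => v (Sum.inr i)) := by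
      funext a; rcases a with a | a <;> rfl
    rw [this]; exact h _ _

lemma realize_sAll3 {θ : Lang.Formula ((Fin k ⊕ Fin k) ⊕ Fin k)} :
    (M ⊨ sAll θ) ↔ ∀ x y z : Fin k → M, θ.Realize (Sum.elim (Sum.elim x y) z) := by
  rw [realize_sAll]
  constructor
  · intro h x y z; exact h _
  · intro h v
    have : v = Sum.elim (Sum.elim (fun i => v (Sum.inl (Sum.inl i)))
        (fun i => v (Sum.inl (Sum.inr i)))) (fun i => v (Sum.inr i)) := by
      funext a; rcases a with (a | a) | a <;> rfl
    rw [this]; exact h _ _ _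

/-- `∀ x, φ(x,x)`. -/
noncomputable def sRefl (φ : Lang.Formula (Fin k ⊕ Fin k)) : Lang.Sentence :=
  sAll (φ.relabel (Sum.elim id id : Fin k ⊕ Fin k → Fin k))

lemma realize_sRefl {φ : Lang.Formula (Fin k ⊕ Fin k)} :
    (M ⊨ sRefl φ) ↔ ∀ x : Fin k → M, φ.Realize (Sum.elim x x) := by
  rw [sRefl, realize_sAll]
  refine forall_congr' fun x => ?_
  rw [Formula.realize_relabel]
  have : x ∘ (Sum.elim id id : Fin k ⊕ Fin k → Fin k) = Sum.elim x x := by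
    funext a; rcases a with a | a <;> rfl
  rw [this]

/-- `∀ x y, φ(x,y) → φ(y,x)`. -/
noncomputable def sSymm (φ : Lang.Formula (Fin k ⊕ Fin k)) : Lang.Sentence :=
  sAll (φ ⟹ φ.relabel (Sum.elim Sum.inr Sum.inl : Fin k ⊕ Fin k → Fin k ⊕ Fin k))

lemma realize_sSymm {φ : Lang.Formula (Fin k ⊕ Fin k)} :
    (M ⊨ sSymm φ) ↔ ∀ x y : Fin k → M,
      φ.Realize (Sum.elim x y) → φ.Realize (Sum.elim y x) := by
  rw [sSymm, realize_sAll2]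
  refine forall_congr' fun x => forall_congr' fun y => ?_
  rw [Formula.realize_imp, Formula.realize_relabel]
  have : Sum.elim x y ∘ (Sum.elim Sum.inr Sum.inl : Fin k ⊕ Fin k → Fin k ⊕ Fin k)
      = Sum.elim y x := by funext a; rcases a with a | a <;> rfl
  rw [this]

/-- `∀ x y z, φ(x,y) → φ(y,z) → φ(x,z)`. -/
noncomputable def sTrans (φ : Lang.Formula (Fin k ⊕ Fin k)) : Lang.Sentence :=
  sAll ((φ.relabel (Sum.elim (fun i => Sum.inl (Sum.inl i)) (fun i => Sum.inl (Sum.inr i)) :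
          Fin k ⊕ Fin k → (Fin k ⊕ Fin k) ⊕ Fin k)) ⟹
    (φ.relabel (Sum.elim (fun i => Sum.inl (Sum.inr i)) Sum.inr)) ⟹
    (φ.relabel (Sum.elim (fun i => Sum.inl (Sum.inl i)) Sum.inr)))

lemma realize_sTrans {φ : Lang.Formula (Fin k ⊕ Fin k)} :
    (M ⊨ sTrans φ) ↔ ∀ x y z : Fin k → M,
      φ.Realize (Sum.elim x y) → φ.Realize (Sum.elim y z) → φ.Realize (Sum.elim x z) := by
  rw [sTrans, realize_sAll3]
  refine forall_congr' fun x => forall_congr' fun y => forall_congr' fun z => ?_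
  rw [Formula.realize_imp, Formula.realize_imp, Formula.realize_relabel,
    Formula.realize_relabel, Formula.realize_relabel]
  have h1 : Sum.elim (Sum.elim x y) z ∘ (Sum.elim (fun i => Sum.inl (Sum.inl i))
      (fun i => Sum.inl (Sum.inr i)) : Fin k ⊕ Fin k → (Fin k ⊕ Fin k) ⊕ Fin k)
      = Sum.elim x y := by funext a; rcases a with a | a <;> rfl
  have h2 : Sum.elim (Sum.elim x y) z ∘ (Sum.elim (fun i => Sum.inl (Sum.inr i)) Sum.inr :
      Fin k ⊕ Fin k → (Fin k ⊕ Fin k) ⊕ Fin k) = Sum.elim y z := by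
    funext a; rcases a with a | a <;> rfl
  have h3 : Sum.elim (Sum.elim x y) z ∘ (Sum.elim (fun i => Sum.inl (Sum.inl i)) Sum.inr :
      Fin k ⊕ Fin k → (Fin k ⊕ Fin k) ⊕ Fin k) = Sum.elim x z := by
    funext a; rcases a with a | a <;> rfl
  rw [h1, h2, h3]

/-- `∀ x ∃ y, ψ(x,y)`. -/
noncomputable def sTotal (φ : Lang.Formula (Fin k ⊕ Fin k)) : Lang.Sentence :=
  sAll (Formula.iExs (Fin k) (psiF φ))

lemma realize_sTotal {φ : Lang.Formula (Fin k ⊕ Fin k)} :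
    (M ⊨ sTotal φ) ↔ ∀ x : Fin k → M, ∃ y : Fin k → M, (psiF φ).Realize (Sum.elim x y) := by
  rw [sTotal, realize_sAll]
  refine forall_congr' fun x => ?_
  rw [Formula.realize_iExs]

/-- `∀ x y y', ψ(x,y) → ψ(x,y') → y = y'`. -/
noncomputable def sUnique (φ : Lang.Formula (Fin k ⊕ Fin k)) : Lang.Sentence :=
  sAll (((psiF φ).relabel (Sum.elim (fun i => Sum.inl (Sum.inl i)) (fun i => Sum.inl (Sum.inr i)) :
          Fin k ⊕ Fin k → (Fin k ⊕ Fin k) ⊕ Fin k)) ⟹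
    ((psiF φ).relabel (Sum.elim (fun i => Sum.inl (Sum.inl i)) Sum.inr)) ⟹
    (BoundedFormula.iInf fun i : Fin k =>
      Term.equal (Term.var (Sum.inl (Sum.inr i))) (Term.var (Sum.inr i))))

lemma realize_sUnique {φ : Lang.Formula (Fin k ⊕ Fin k)} :
    (M ⊨ sUnique φ) ↔ ∀ x y y' : Fin k → M,
      (psiF φ).Realize (Sum.elim x y) → (psiF φ).Realize (Sum.elim x y') → y = y' := by
  rw [sUnique, realize_sAll3]
  refine forall_congr' fun x => forall_congr' fun y => forall_congr' fun y' => ?_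
  rw [Formula.realize_imp, Formula.realize_imp, Formula.realize_relabel, Formula.realize_relabel]
  have h1 : Sum.elim (Sum.elim x y) y' ∘ (Sum.elim (fun i => Sum.inl (Sum.inl i))
      (fun i => Sum.inl (Sum.inr i)) : Fin k ⊕ Fin k → (Fin k ⊕ Fin k) ⊕ Fin k)
      = Sum.elim x y := by funext a; rcases a with a | a <;> rfl
  have h2 : Sum.elim (Sum.elim x y) y' ∘ (Sum.elim (fun i => Sum.inl (Sum.inl i)) Sum.inr :
      Fin k ⊕ Fin k → (Fin k ⊕ Fin k) ⊕ Fin k) = Sum.elim x y' := by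
    funext a; rcases a with a | a <;> rfl
  rw [h1, h2]
  refine imp_congr_right fun _ => imp_congr_right fun _ => ?_
  rw [Formula.Realize, BoundedFormula.realize_iInf]
  have hbd : ∀ (θ : Lang.Formula ((Fin k ⊕ Fin k) ⊕ Fin k)) (w : (Fin k ⊕ Fin k) ⊕ Fin k → M),
      BoundedFormula.Realize θ w default ↔ θ.Realize w := fun _ _ => Iff.rfl
  simp [hbd, funext_iff]

/-- `∀ x y, φ(x,y) ↔ ∃ z, ψ(x,z) ∧ ψ(y,z)`. -/
noncomputable def sEchar (φ : Lang.Formula (Fin k ⊕ Fin k)) : Lang.Sentence :=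
  sAll (φ.iff (Formula.iExs (Fin k)
    (((psiF φ).relabel (Sum.elim (fun i => Sum.inl (Sum.inl i)) Sum.inr :
        Fin k ⊕ Fin k → (Fin k ⊕ Fin k) ⊕ Fin k)) ⊓
     ((psiF φ).relabel (Sum.elim (fun i => Sum.inl (Sum.inr i)) Sum.inr)))))

lemma realize_sEchar {φ : Lang.Formula (Fin k ⊕ Fin k)} :
    (M ⊨ sEchar φ) ↔ ∀ x y : Fin k → M,
      (φ.Realize (Sum.elim x y) ↔ ∃ z : Fin k → M,
        (psiF φ).Realize (Sum.elim x z) ∧ (psiF φ).Realize (Sum.elim y z)) := by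
  rw [sEchar, realize_sAll2]
  refine forall_congr' fun x => forall_congr' fun y => ?_
  rw [Formula.realize_iff]
  refine iff_congr Iff.rfl ?_
  rw [Formula.realize_iExs]
  refine exists_congr fun z => ?_
  rw [Formula.realize_inf, Formula.realize_relabel, Formula.realize_relabel]
  have h1 : Sum.elim (Sum.elim x y) z ∘
      (Sum.elim (fun i => Sum.inl (Sum.inl i)) Sum.inr :
        Fin k ⊕ Fin k → (Fin k ⊕ Fin k) ⊕ Fin k) = Sum.elim x z := by
    funext a; rcases a with a | a <;> rfl
  have h2 : Sum.elim (Sum.elim x y) z ∘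
      (Sum.elim (fun i => Sum.inl (Sum.inr i)) Sum.inr :
        Fin k ⊕ Fin k → (Fin k ⊕ Fin k) ⊕ Fin k) = Sum.elim y z := by
    funext a; rcases a with a | a <;> rfl
  rw [h1, h2]

end Sentences

/-! ### The encoding of `ℤ` into `ℕ` and the lex well-ordering -/

def zenc (a : ℤ) : ℕ := if 0 ≤ a then 2 * a.natAbs else 2 * a.natAbs - 1

lemma zenc_lt_iff {a b : ℤ} : zenc a < zenc b ↔ Slt a b := by
  unfold zenc Slt Sle AbsLt; split_ifs <;> omega

lemma zenc_inj {a b : ℤ} (h : zenc a = zenc b) : a = b := by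
  unfold zenc at h; split_ifs at h <;> omega

lemma lexLe_antisymm {k : ℕ} {x y : Fin k → ℤ} (h1 : LexLe x y) (h2 : LexLe y x) : x = y := by
  rcases h1 with rfl | ⟨i, hj, hi⟩; · rfl
  rcases h2 with rfl | ⟨i', hj', hi'⟩; · rfl
  exfalso
  rcases lt_trichotomy i i' with h | rfl | h
  · exact hi.2 (hj' i h).symm
  · exact Nat.lt_asymm (zenc_lt_iff.2 hi) (zenc_lt_iff.2 hi')
  · exact hi'.2 (hj i' h).symm

lemma exists_lexLe_least {k : ℕ} (S : Set (Fin k → ℤ)) (hS : S.Nonempty) :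
    ∃ m ∈ S, ∀ y ∈ S, LexLe m y := by
  classical
  have hwfι : WellFounded ((· < ·) : Fin k → Fin k → Prop) := IsWellFounded.wf
  have hwf : WellFounded (Pi.Lex ((· < ·) : Fin k → Fin k → Prop)
      (fun {_} => ((· < ·) : ℕ → ℕ → Prop))) :=
    Pi.Lex.wellFounded _ fun _ => Nat.lt_wfRel.wf
  have htri := @trichotomous_of _ _ (Pi.trichotomous_lex ((· < ·) : Fin k → Fin k → Prop)
      (fun {_} => ((· < ·) : ℕ → ℕ → Prop)) hwfι)
  set e : (Fin k → ℤ) → (Fin k → ℕ) := fun x i => zenc (x i) with he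
  obtain ⟨t, ⟨m, hmS, rfl⟩, hmin⟩ := hwf.has_min (e '' S) (hS.image e)
  refine ⟨m, hmS, fun y hy => ?_⟩
  rcases htri (e m) (e y) with h | h | h
  · obtain ⟨i, hj, hi⟩ := h
    exact Or.inr ⟨i, fun j hji => zenc_inj (hj j hji), zenc_lt_iff.1 hi⟩
  · left; funext i; exact zenc_inj (congrFun h i)
  · exact absurd h (hmin (e y) ⟨y, hy, rfl⟩)

/-! ### The sentences hold in `ℤ` -/

lemma int_sentences {k : ℕ} (φ : Lang.Formula (Fin k ⊕ Fin k))
    (h1 : ℤ ⊨ sRefl φ) (h2 : ℤ ⊨ sSymm φ) (h3 : ℤ ⊨ sTrans φ) :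
    (ℤ ⊨ sTotal φ) ∧ (ℤ ⊨ sUnique φ) ∧ (ℤ ⊨ sEchar φ) := by
  rw [realize_sRefl] at h1
  rw [realize_sSymm] at h2
  rw [realize_sTrans] at h3
  set R : (Fin k → ℤ) → (Fin k → ℤ) → Prop := fun x y => φ.Realize (Sum.elim x y) with hR
  have hpsi : ∀ x y : Fin k → ℤ, (psiF φ).Realize (Sum.elim x y) ↔
      (R x y ∧ ∀ w, R x w → LexLe y w) := fun x y => realize_psiF
  -- the least element of the class of `x`
  have hleast : ∀ x : Fin k → ℤ, ∃ z, (psiF φ).Realize (Sum.elim x z) := by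
    intro x
    obtain ⟨m, hm, hmin⟩ := exists_lexLe_least {w | R x w} ⟨x, h1 x⟩
    exact ⟨m, (hpsi x m).2 ⟨hm, fun w hw => hmin w hw⟩⟩
  refine ⟨realize_sTotal.2 hleast, realize_sUnique.2 ?_, realize_sEchar.2 ?_⟩
  · intro x y y' hy hy'
    rw [hpsi] at hy hy'
    exact lexLe_antisymm (hy.2 y' hy'.1) (hy'.2 y hy.1)
  · intro x y
    constructor
    · intro hxy
      obtain ⟨z, hz⟩ := hleast x
      rw [hpsi] at hz
      refine ⟨z, (hpsi x z).2 hz, (hpsi y z).2 ⟨h3 y x z (h2 x y hxy) hz.1, fun w hw => ?_⟩⟩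
      exact hz.2 w (h3 x y w hxy hw)
    · rintro ⟨z, hxz, hyz⟩
      rw [hpsi] at hxz hyz
      exact h3 x z y hxz.1 (h2 y z hyz.1)

/-- **Uniform elimination of imaginaries** for Presburger arithmetic: for every
`∅`-definable equivalence relation `E` on `G^k` in a `Z`-group `G` there are `r : ℕ` and a
`∅`-definable function `F : G^k → G^r` such that `E x y` holds iff `F x = F y`. -/
theorem uniform_elimination_of_imaginaries (hG : IsZGroup G) (k : ℕ)
    (E : Set (Fin k ⊕ Fin k → G))
    (hdef : Set.Definable (∅ : Set G) Lang E)
    (hrefl : ∀ x : Fin k → G, Sum.elim x x ∈ E)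
    (hsymm : ∀ x y : Fin k → G, Sum.elim x y ∈ E → Sum.elim y x ∈ E)
    (htrans : ∀ x y z : Fin k → G, Sum.elim x y ∈ E → Sum.elim y z ∈ E → Sum.elim x z ∈ E) :
    ∃ (r : ℕ) (F : (Fin k → G) → (Fin r → G)),
      Set.Definable (∅ : Set G) Lang
        {z : Fin k ⊕ Fin r → G | z ∘ Sum.inr = F (z ∘ Sum.inl)} ∧
      ∀ x y : Fin k → G, (Sum.elim x y ∈ E ↔ F x = F y) := by
  obtain ⟨φ, hφ⟩ := Set.empty_definable_iff.1 hdef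
  have hsent : ∀ σ : Lang.Sentence, (ℤ ⊨ σ) ↔ (G ⊨ σ) :=
    (elementarilyEquivalent_iff).1 hG
  have hEiff : ∀ x y : Fin k → G, (Sum.elim x y ∈ E ↔ φ.Realize (Sum.elim x y)) := by
    intro x y; rw [hφ]; exact Iff.rfl
  have hR : G ⊨ sRefl φ := realize_sRefl.2 fun x => (hEiff x x).1 (hrefl x)
  have hS : G ⊨ sSymm φ := realize_sSymm.2 fun x y h =>
    (hEiff y x).1 (hsymm x y ((hEiff x y).2 h))
  have hT : G ⊨ sTrans φ := realize_sTrans.2 fun x y z h h' =>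
    (hEiff x z).1 (htrans x y z ((hEiff x y).2 h) ((hEiff y z).2 h'))
  obtain ⟨hTot, hUni, hCh⟩ := int_sentences φ ((hsent _).2 hR) ((hsent _).2 hS) ((hsent _).2 hT)
  have hTotG := realize_sTotal.1 ((hsent _).1 hTot)
  have hUniG := realize_sUnique.1 ((hsent _).1 hUni)
  have hChG := realize_sEchar.1 ((hsent _).1 hCh)
  choose F hF using hTotG
  have hgraph : ∀ x y : Fin k → G, ((psiF φ).Realize (Sum.elim x y) ↔ y = F x) := fun x y =>
    ⟨fun h => hUniG x y (F x) h (hF x), fun h => h ▸ hF x⟩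
  refine ⟨k, F, ?_, ?_⟩
  · rw [Set.empty_definable_iff]
    refine ⟨psiF φ, ?_⟩
    ext z
    have hz : z = Sum.elim (z ∘ Sum.inl) (z ∘ Sum.inr) := by
      funext a; rcases a with a | a <;> rfl
    simp only [Set.mem_setOf_eq]
    rw [show ((psiF φ).Realize z ↔ (psiF φ).Realize (Sum.elim (z ∘ Sum.inl) (z ∘ Sum.inr)))
        from by rw [← hz], hgraph]
  · intro x y
    rw [hEiff, hChG]
    constructor
    · rintro ⟨z, h1, h2⟩
      rw [hgraph] at h1 h2
      rw [← h1, ← h2]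
    · intro h
      exact ⟨F x, hF x, (hgraph y (F x)).2 h⟩

end Presburger
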